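/- Let P ∈ ℝ^{n×n} be a symmetric idempotent matrix of rank n − q, and let H ∈ ℝ^{(n−q)×n} be such that HᵀH = P and HHᵀ = I_{n−q}. Then for any Y ∈ ℝ^{n×p}, with R = PY and Ỹ = HY, one has R(RᵀR)⁻Rᵀ = Hᵀ (Ỹ(ỸᵀỸ)⁻Ỹᵀ) H, and moreover Ỹ(ỸᵀỸ)⁻Ỹᵀ = H (R(RᵀR)⁻Rᵀ) Hᵀ, so the two statistics are functions of each other. -/
import Mathlib


open Matrix

/-- The four Penrose conditions characterizing the Moore–Penrose pseudoinverse. -/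
def IsMoorePenrose {m n : Type*} [Fintype m] [Fintype n]
    (A : Matrix m n ℝ) (Ap : Matrix n m ℝ) : Prop :=
  A * Ap * A = A ∧ Ap * A * Ap = Ap ∧ (A * Ap)ᵀ = A * Ap ∧ (Ap * A)ᵀ = Ap * A

lemma mp_unique {m n : Type*} [Fintype m] [Fintype n]
    (A : Matrix m n ℝ) (B C : Matrix n m ℝ)
    (hB : IsMoorePenrose A B) (hC : IsMoorePenrose A C) : B = C := by
  obtain ⟨hB1, hB2, hB3, hB4⟩ := hB
  obtain ⟨hC1, hC2, hC3, hC4⟩ := hC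
  have hAB : A * B = A * C := by
    calc A * B = (A * B)ᵀ := hB3.symm
    _ = ((A * C * A) * B)ᵀ := by rw [hC1]
    _ = (A * B)ᵀ * (A * C)ᵀ := by
        simp [Matrix.transpose_mul, Matrix.mul_assoc]
    _ = A * B * (A * C) := by rw [hB3, hC3]
    _ = (A * B * A) * C := by simp [Matrix.mul_assoc]
    _ = A * C := by rw [hB1]
  have hBA : B * A = C * A := by
    calc B * A = (B * A)ᵀ := hB4.symm
    _ = (B * (A * C * A))ᵀ := by rw [hC1]
    _ = (C * A)ᵀ * (B * A)ᵀ := by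
        simp [Matrix.transpose_mul, Matrix.mul_assoc]
    _ = C * A * (B * A) := by rw [hB4, hC4]
    _ = C * (A * B * A) := by simp [Matrix.mul_assoc]
    _ = C * A := by rw [hB1]
  calc B = B * A * B := hB2.symm
  _ = B * (A * C) := by rw [Matrix.mul_assoc, hAB]
  _ = (C * A) * C := by rw [← Matrix.mul_assoc, hBA]
  _ = C := hC2

/-- With `P` symmetric idempotent of rank `n − q`, `HᵀH = P`, `HHᵀ = I`,
`R = PY` and `Ỹ = HY`, one has `R(RᵀR)⁻Rᵀ = Hᵀ(Ỹ(ỸᵀỸ)⁻Ỹᵀ)H` and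
`Ỹ(ỸᵀỸ)⁻Ỹᵀ = H(R(RᵀR)⁻Rᵀ)Hᵀ`. -/
theorem stmt5 {n p q : ℕ} (hq : q < n)
    (P : Matrix (Fin n) (Fin n) ℝ) (hPsymm : Pᵀ = P) (hPidem : P * P = P)
    (hPrank : P.rank = n - q)
    (H : Matrix (Fin (n - q)) (Fin n) ℝ) (hH1 : Hᵀ * H = P) (hH2 : H * Hᵀ = 1)
    (Y : Matrix (Fin n) (Fin p) ℝ)
    (G₁ G₂ : Matrix (Fin p) (Fin p) ℝ)
    (hG₁ : IsMoorePenrose ((P * Y)ᵀ * (P * Y)) G₁)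
    (hG₂ : IsMoorePenrose ((H * Y)ᵀ * (H * Y)) G₂) :
    (P * Y) * G₁ * (P * Y)ᵀ = Hᵀ * ((H * Y) * G₂ * (H * Y)ᵀ) * H ∧
    (H * Y) * G₂ * (H * Y)ᵀ = H * ((P * Y) * G₁ * (P * Y)ᵀ) * Hᵀ := by
  have hgram : (P * Y)ᵀ * (P * Y) = (H * Y)ᵀ * (H * Y) := by
    simp only [Matrix.transpose_mul]
    rw [Matrix.mul_assoc, ← Matrix.mul_assoc Pᵀ, hPsymm, hPidem,
      Matrix.mul_assoc, ← Matrix.mul_assoc Hᵀ, hH1]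
  have hG : G₁ = G₂ := mp_unique _ _ _ hG₁ (hgram ▸ hG₂)
  subst hG
  have key : (P * Y) * G₁ * (P * Y)ᵀ = Hᵀ * ((H * Y) * G₁ * (H * Y)ᵀ) * H := by
    have hP : P = Hᵀ * H := hH1.symm
    simp only [Matrix.transpose_mul, Matrix.transpose_transpose, hPsymm, hP, Matrix.mul_assoc]
  refine ⟨key, ?_⟩
  rw [key]
  simp only [← Matrix.mul_assoc, hH2, Matrix.one_mul]
  simp only [Matrix.mul_assoc, hH2, Matrix.mul_one]
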